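/- Let V be a finite-dimensional complex vector space with a nondegenerate symmetric bilinear form and φ a skew-symmetric endomorphism. Then the restriction of the form to L_0 = Ker(φ^{dim V}) is nondegenerate. -/

import Mathlib

/-!
The skew-symmetry of `φ` makes `φ ^ n` and `(-φ) ^ n` adjoint, so `ker (φ ^ n)` is orthogonal,
on both sides, to `range (φ ^ n)`. For `n = dim V` these two subspaces are complementary (Fitting
decomposition), so a vector of `ker (φ ^ n)` orthogonal to `ker (φ ^ n)` is orthogonal to all of
`V`, hence zero.
-/

open Module

namespace Module.End

variable {K V : Type*} [Field K] [AddCommGroup V] [Module K V] [FiniteDimensional K V]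

theorem disjoint_ker_pow_finrank_range_pow_finrank (f : End K V) :
    Disjoint (LinearMap.ker (f ^ finrank K V)) (LinearMap.range (f ^ finrank K V)) := by
  set n := finrank K V
  rw [Submodule.disjoint_def]
  rintro - hx ⟨y, rfl⟩
  have hy : y ∈ LinearMap.ker (f ^ (n + n)) := by
    rwa [LinearMap.mem_ker, pow_add, mul_apply]
  rwa [ker_pow_eq_ker_pow_finrank_of_le (Nat.le_add_right n n)] at hy

theorem isCompl_ker_pow_finrank_range_pow_finrank (f : End K V) :
    IsCompl (LinearMap.ker (f ^ finrank K V)) (LinearMap.range (f ^ finrank K V)) := by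
  refine (Submodule.isCompl_iff_disjoint _ _ ?_).mpr f.disjoint_ker_pow_finrank_range_pow_finrank
  rw [add_comm, LinearMap.finrank_range_add_finrank_ker]

end Module.End

namespace LinearMap

variable {R M : Type*} [CommRing R] [AddCommGroup M] [Module R M] {B : LinearMap.BilinForm R M}

theorem IsAdjointPair.pow {f g : Module.End R M} (h : IsAdjointPair B B f g) (k : ℕ) :
    IsAdjointPair B B ⇑(f ^ k) ⇑(g ^ k) := by
  induction k with
  | zero => exact isAdjointPair_one
  | succ k ih => rw [pow_succ f, pow_succ' g]; exact ih.mul h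

theorem IsAdjointPair.apply_eq_zero_of_mem_range_of_mem_ker {f g : Module.End R M}
    (h : IsAdjointPair B B f g) {x y : M} (hx : x ∈ range f) (hy : y ∈ ker g) : B x y = 0 := by
  obtain ⟨z, rfl⟩ := hx
  rw [h, mem_ker.mp hy, map_zero]

theorem IsAdjointPair.apply_eq_zero_of_mem_ker_of_mem_range {f g : Module.End R M}
    (h : IsAdjointPair B B f g) {x y : M} (hx : x ∈ ker f) (hy : y ∈ range g) : B x y = 0 := by
  obtain ⟨z, rfl⟩ := hy
  rw [← h, mem_ker.mp hx, map_zero, zero_apply]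

theorem BilinForm.separatingLeft_restrict_of_codisjoint {W W' : Submodule R M}
    (hB : B.SeparatingLeft) (hW : Codisjoint W W') (hWW' : ∀ x ∈ W, ∀ y ∈ W', B x y = 0) :
    (B.restrict W).SeparatingLeft := by
  intro x hx
  refine Subtype.ext (hB x fun v => ?_)
  have hv : v ∈ W ⊔ W' := hW.eq_top ▸ Submodule.mem_top
  obtain ⟨w, hw, w', hw', rfl⟩ := Submodule.mem_sup.mp hv
  rw [map_add, hWW' x x.2 w' hw', add_zero]
  exact hx ⟨w, hw⟩

theorem BilinForm.nondegenerate_restrict_of_codisjoint {W W' : Submodule R M}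
    (hB : B.Nondegenerate) (hW : Codisjoint W W') (hWW' : ∀ x ∈ W, ∀ y ∈ W', B x y = 0)
    (hW'W : ∀ y ∈ W', ∀ x ∈ W, B y x = 0) : (B.restrict W).Nondegenerate :=
  ⟨BilinForm.separatingLeft_restrict_of_codisjoint hB.1 hW hWW',
    flip_separatingLeft.mp <|
      BilinForm.separatingLeft_restrict_of_codisjoint (B := B.flip)
        (flip_separatingLeft.mpr hB.2) hW
        fun x hx y hy => hW'W y hy x hx⟩

end LinearMap

theorem restrict_nondegenerate_on_L0_general
    (V : Type*) [AddCommGroup V] [Module ℂ V] [FiniteDimensional ℂ V]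
    (B : LinearMap.BilinForm ℂ V) (hBnd : B.Nondegenerate)
    (φ : Module.End ℂ V) (hskew : ∀ x y, B (φ x) y + B x (φ y) = 0) :
    (B.restrict (LinearMap.ker (φ ^ (Module.finrank ℂ V)))).Nondegenerate := by
  set n := finrank ℂ V
  have hφ : LinearMap.IsAdjointPair B B ⇑φ ⇑(-φ) := fun x y => by
    simpa [eq_neg_iff_add_eq_zero] using hskew x y
  have hφ' : LinearMap.IsAdjointPair B B ⇑(-φ) ⇑φ := fun x y => by
    simpa [neg_eq_iff_add_eq_zero, add_comm] using hskew x y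
  have hker : LinearMap.ker ((-φ) ^ n) = LinearMap.ker (φ ^ n) := by
    rw [neg_pow]
    rcases neg_one_pow_eq_or (Module.End ℂ V) n with h | h <;> simp [h]
  refine LinearMap.BilinForm.nondegenerate_restrict_of_codisjoint hBnd
    φ.isCompl_ker_pow_finrank_range_pow_finrank.codisjoint
    (fun x hx y hy => ?_) fun y hy x hx => ?_
  · exact (hφ'.pow n).apply_eq_zero_of_mem_ker_of_mem_range (hker ▸ hx) hy
  · exact (hφ.pow n).apply_eq_zero_of_mem_range_of_mem_ker hy (hker ▸ hx)

/-- For a skew-symmetric endomorphism of a finite-dimensional complex vector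
space with a nondegenerate symmetric bilinear form, the restriction of the form to the
generalized eigenspace `L_0 = Ker (φ ^ dim V)` is nondegenerate. -/
theorem restrict_nondegenerate_on_L0
    (V : Type*) [AddCommGroup V] [Module ℂ V] [FiniteDimensional ℂ V]
    (B : LinearMap.BilinForm ℂ V) (hBnd : B.Nondegenerate) (hBsymm : ∀ x y, B x y = B y x)
    (φ : Module.End ℂ V) (hskew : ∀ x y, B (φ x) y + B x (φ y) = 0) :
    (B.restrict (LinearMap.ker (φ ^ (Module.finrank ℂ V)))).Nondegenerate :=
  restrict_nondegenerate_on_L0_general V B hBnd φ hskew
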